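/- For $t \geq 1$, let $\mu$ be an overpartition in $\overline{\mathcal{B}}^{>}_0(\alpha_1,\ldots,\alpha_\lambda;\eta,k,r|t)$ that possesses at least one $(k-2)$-band belonging to $[(t-1)\eta, \overline{(t+1)\eta})$. Then: (1) all $(k-2)$-bands of $\mu$ belonging to $[(t-1)\eta, \overline{(t+1)\eta})$ have the same type (N or O); (2) if $g(\mu) = \overline{(t+1)\eta}$ or $g(\mu) = (t+1)\eta$, then all such $(k-2)$-bands are of type O. -/

import Mathlib

/-- A part of an overpartition: a size together with a flag telling
whether the part is overlined. -/
structure OPart where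
  size : ℕ
  isOver : Bool
deriving DecidableEq

/-- The value of a part in the ordering `1̄ < 1 < 2̄ < 2 < ⋯`:
an overlined part of size `t` has value `2t - 1`, a non-overlined one `2t`. -/
def OPart.val (p : OPart) : ℕ := 2 * p.size - (if p.isOver then 1 else 0)

def dpart : OPart := ⟨0, false⟩

/-- value of the `i`-th part (0-based). -/
def pval (π : List OPart) (i : ℕ) : ℕ := (π.getD i dpart).val

def pover (π : List OPart) (i : ℕ) : Bool := (π.getD i dpart).isOver

def psize (π : List OPart) (i : ℕ) : ℕ := (π.getD i dpart).size

/-- the weight `|π|`: the sum of the sizes of the parts. -/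
def wt (π : List OPart) : ℕ := (π.map OPart.size).sum

/-- An overpartition: a sequence of positive parts, non-increasing in the
ordering `1̄ < 1 < 2̄ < 2 < ⋯`, in which each size is overlined at most once
(the overlined copy, being smallest among equal sizes, is the last occurrence). -/
def IsOverPartition (π : List OPart) : Prop :=
  List.Pairwise (fun p q : OPart => q.val ≤ p.val) π ∧
  (∀ p ∈ π, 0 < p.size) ∧
  (∀ t : ℕ, π.count (⟨t, true⟩ : OPart) ≤ 1)

/-- `{π_{i+l}}_{0 ≤ l ≤ m-1}` is an `m`-band of `π`:
`π_i ≤ π_{i+m-1} + η`, with strict inequality if `π_i` is overlined. -/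
def IsBand (η : ℕ) (π : List OPart) (m i : ℕ) : Prop :=
  i + m ≤ π.length ∧
  pval π i ≤ pval π (i + m - 1) + 2 * η ∧
  (pover π i = true → pval π i < pval π (i + m - 1) + 2 * η)

/-- `V̄_π(N)`: the number of overlined parts of value at most `N`
whose size is not divisible by `η`. -/
def Vbar (η : ℕ) (π : List OPart) (N : ℕ) : ℕ :=
  π.countP (fun p => p.isOver && decide (p.val ≤ N) && !(decide (p.size % η = 0)))

/-- `Ō_π(N)`: the number of overlined parts of value at least `N`
whose size is divisible by `η`. -/
def Obar (η : ℕ) (π : List OPart) (N : ℕ) : ℕ :=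
  π.countP (fun p => p.isOver && decide (N ≤ p.val) && decide (p.size % η = 0))

/-- `f_{≤η}(π)`: the number of parts not exceeding `η`. -/
def fLe (η : ℕ) (π : List OPart) : ℕ :=
  π.countP (fun p => decide (p.val ≤ 2 * η))

/-- `[|π_i|/η] + ⋯ + [|π_{i+m-1}|/η]`. -/
def bandSum (η : ℕ) (π : List OPart) (i m : ℕ) : ℕ :=
  ∑ l ∈ Finset.range m, psize π (i + l) / η

/-- Every part is congruent to `0, α_1, …, α_λ` modulo `η`. -/
def CongParts (α : ℕ → ℕ) (lam η : ℕ) (π : List OPart) : Prop :=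
  ∀ p ∈ π, p.size % η = 0 ∨ ∃ s, 1 ≤ s ∧ s ≤ lam ∧ p.size % η = α s

/-- The class `B̄(α_1,…,α_λ; η, k, r)`: conditions (1)–(4) of the definition
of `B̄₀`. -/
def InBbar (α : ℕ → ℕ) (lam η k r : ℕ) (π : List OPart) : Prop :=
  IsOverPartition π ∧
  CongParts α lam η π ∧
  (∀ p ∈ π, p.isOver = false → η ∣ p.size) ∧
  (∀ i, i + k ≤ π.length →
    pval π (i + k - 1) + 2 * η ≤ pval π i ∧
    (pover π i = false → pval π (i + k - 1) + 2 * η < pval π i)) ∧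
  fLe η π ≤ r

/-- An `m`-band at `i` is even:
`[|π_i|/η]+⋯+[|π_{i+m-1}|/η] ≡ r - 1 + V̄_π(π_i) + Ō_π(π_{i+m-1}) (mod 2)`. -/
def EvenBand (η r : ℕ) (π : List OPart) (m i : ℕ) : Prop :=
  Int.ModEq 2 (bandSum η π i m)
    ((r : ℤ) - 1 + (Vbar η π (pval π i) : ℤ) + (Obar η π (pval π (i + m - 1)) : ℤ))

/-- Condition (5) of the definition of `B̄₀`. -/
def Cond5 (η k r : ℕ) (π : List OPart) : Prop :=
  fLe η π = r → (⟨η, true⟩ : OPart) ∉ π →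
    ∃ i, IsBand η π (k - 1) i ∧ pval π i < 2 * (2 * η) - 1

/-- The class `B̄₀(α_1,…,α_λ; η, k, r)`: conditions (1)–(6). -/
def InB0 (α : ℕ → ℕ) (lam η k r : ℕ) (π : List OPart) : Prop :=
  InBbar α lam η k r π ∧ Cond5 η k r π ∧
  ∀ i, IsBand η π (k - 1) i → EvenBand η r π (k - 1) i

/-- `s(π) > t̄η`: every overlined part divisible by `η` has size `> tη`. -/
def SGt (η t : ℕ) (π : List OPart) : Prop :=
  ∀ p ∈ π, p.isOver = true → η ∣ p.size → t * η < p.size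

/-- `s(π) = t̄η`. -/
def SEq (η t : ℕ) (π : List OPart) : Prop :=
  (⟨t * η, true⟩ : OPart) ∈ π ∧
  ∀ p ∈ π, p.isOver = true → η ∣ p.size → t * η ≤ p.size

/-- `g(π) ≥ x` (value `x`): every part starting a `(k-1)`-band has value `≥ x`. -/
def GGe (η k : ℕ) (π : List OPart) (x : ℕ) : Prop :=
  ∀ i, IsBand η π (k - 1) i → x ≤ pval π i

/-- `g(π) < x`: some part starting a `(k-1)`-band has value `< x`. -/
def GLt (η k : ℕ) (π : List OPart) (x : ℕ) : Prop :=
  ∃ i, IsBand η π (k - 1) i ∧ pval π i < x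

/-- `π ∈ B̄₀^=(α_1,…,α_λ; η,k,r | t)`. -/
def InBeq (α : ℕ → ℕ) (lam η k r t : ℕ) (π : List OPart) : Prop :=
  InB0 α lam η k r π ∧
  ((SEq η t π ∧ GGe η k π (2 * (t * η) - 1)) ∨
   (SGt η t π ∧ GGe η k π (2 * (t * η)) ∧ GLt η k π (2 * ((t + 1) * η) - 1)))

/-- `π ∈ B̄₀^>(α_1,…,α_λ; η,k,r | t)`. -/
def InBgt (α : ℕ → ℕ) (lam η k r t : ℕ) (π : List OPart) : Prop :=
  InB0 α lam η k r π ∧ SGt η t π ∧ GGe η k π (2 * ((t + 1) * η) - 1)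

/-- An `m`-band belonging to the closed interval `[(t-1)η, (t+1)η]`. -/
def BandInC (η t : ℕ) (π : List OPart) (m i : ℕ) : Prop :=
  IsBand η π m i ∧ 2 * ((t - 1) * η) ≤ pval π (i + m - 1) ∧
  pval π i ≤ 2 * ((t + 1) * η)

/-- An `m`-band belonging to `[(t-1)η, \overline{(t+1)η})`. -/
def BandInO (η t : ℕ) (π : List OPart) (m i : ℕ) : Prop :=
  IsBand η π m i ∧ 2 * ((t - 1) * η) ≤ pval π (i + m - 1) ∧
  pval π i < 2 * ((t + 1) * η) - 1

/-- An `m`-band at `i` is of type N. -/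
def TypeN (η r t : ℕ) (π : List OPart) (m i : ℕ) : Prop :=
  Int.ModEq 2 (bandSum η π i m)
    ((t : ℤ) + (r : ℤ) - 1 + (Vbar η π (pval π i) : ℤ) +
      (Obar η π (pval π (i + m - 1)) : ℤ))

/-- `π` is obtained from `μ` by inserting the part `p`. -/
def InsertPart (μ : List OPart) (p : OPart) (π : List OPart) : Prop :=
  ∃ l1 l2, μ = l1 ++ l2 ∧ π = l1 ++ p :: l2

/-- The `(k-1)`-reduction `D_t` as a relation: `μ = D_t(π)`. -/
def DtRel (η t : ℕ) (π μ : List OPart) : Prop :=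
  ((⟨t * η, true⟩ : OPart) ∈ π ∧ InsertPart μ ⟨t * η, true⟩ π) ∨
  ((⟨t * η, true⟩ : OPart) ∉ π ∧ InsertPart μ ⟨t * η, false⟩ π)

/-- `μ` has a `(k-2)`-band belonging to `[(t-1)η, \overline{(t+1)η})` of type N. -/
def HasTypeNBand (η r k t : ℕ) (μ : List OPart) : Prop :=
  ∃ i, BandInO η t μ (k - 2) i ∧ TypeN η r t μ (k - 2) i

/-- The `(k-1)`-augmentation `C_t` as a relation: `π = C_t(μ)`. -/
def CtRel (η r k t : ℕ) (μ π : List OPart) : Prop :=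
  (HasTypeNBand η r k t μ ∧ InsertPart μ ⟨t * η, false⟩ π) ∨
  (¬ HasTypeNBand η r k t μ ∧ InsertPart μ ⟨t * η, true⟩ π)

/-- `B₁`-type overpartitions: conditions (1)–(4), no overlined part divisible
by `η`, and at most `r - 1` parts not exceeding `η`. -/
def InB1over (α : ℕ → ℕ) (lam η k r : ℕ) (π : List OPart) : Prop :=
  InBbar α lam η k r π ∧ (∀ p ∈ π, p.isOver = true → ¬ η ∣ p.size) ∧ fLe η π < r

/-- `D_η`: partitions into distinct parts divisible by `η`. -/
def InD (η : ℕ) (τ : List ℕ) : Prop :=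
  List.Pairwise (· > ·) τ ∧ ∀ x ∈ τ, 0 < x ∧ η ∣ x

/-- Bressoud's class `B₁(α_1,…,α_λ; η,k,r)` of ordinary partitions. -/
def InB1nat (α : ℕ → ℕ) (lam η k r : ℕ) (σ : List ℕ) : Prop :=
  List.Pairwise (· ≥ ·) σ ∧ (∀ x ∈ σ, 0 < x) ∧
  (∀ x ∈ σ, x % η = 0 ∨ ∃ s, 1 ≤ s ∧ s ≤ lam ∧ x % η = α s) ∧
  (∀ x : ℕ, ¬ η ∣ x → σ.count x ≤ 1) ∧
  (∀ i, i + k ≤ σ.length →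
    σ.getD (i + k - 1) 0 + η ≤ σ.getD i 0 ∧
    (η ∣ σ.getD i 0 → σ.getD (i + k - 1) 0 + η < σ.getD i 0)) ∧
  σ.countP (fun x => decide (x ≤ η)) < r

/-- The class `Ā₀(α_1,…,α_λ; η,k,r)`. Congruence conditions involving `η/2`
are stated with sizes doubled. -/
def InA0 (α : ℕ → ℕ) (lam η k r : ℕ) (π : List OPart) : Prop :=
  IsOverPartition π ∧
  CongParts α lam η π ∧
  (Even lam →
    ∀ p ∈ π, p.isOver = false →
      η ∣ p.size ∧
      ¬ (2 * η * (2 * k - lam - 1) ∣ 2 * p.size) ∧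
      2 * p.size % (2 * η * (2 * k - lam - 1)) ≠ η * (2 * r - lam) ∧
      2 * p.size % (2 * η * (2 * k - lam - 1)) ≠
        2 * η * (2 * k - lam - 1) - η * (2 * r - lam)) ∧
  (¬ Even lam →
    (∀ p ∈ π, p.isOver = false →
      η ∣ 2 * p.size ∧
      p.size % (2 * η) ≠ η ∧
      ¬ (2 * η * (2 * k - lam - 1) ∣ 2 * p.size) ∧
      2 * p.size % (2 * η * (2 * k - lam - 1)) ≠ η * (2 * r - lam) ∧
      2 * p.size % (2 * η * (2 * k - lam - 1)) ≠
        2 * η * (2 * k - lam - 1) - η * (2 * r - lam)) ∧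
    (∀ p ∈ π, p.isOver = true → 2 * p.size % (2 * η) ≠ η))

/-!
Slide a band from `[i, i + m₁)` to `[j, j + m₂)`. Modulo 2, the quantity
`[|μ_i|/η] + ⋯ - V̄_μ(μ_i) - Ō_μ(μ_{i+m₁-1})` changes by the upper weights
`[|p|/η] + [p overlined, η ∤ p]` of the parts `p` leaving at the top plus the lower weights
`[|p|/η] + [p overlined, η ∣ p]` of the parts entering at the bottom. Here a leaving part `μ_c` is
either at least `\overline{(t+1)η}` or starts no `(k-1)`-band, hence exceeds `μ_{c+k-2} + η ≥ tη`;
so it lies in `(tη, (t+1)η]` and its upper weight is `t + 1`. An entering part lies more than `η`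
below a part that is at most `(t+1)η`, so in `[(t-1)η, tη)`, and as `s(μ) > \overline{tη}` its
lower weight is `t - 1`.

Sliding one `(k-2)`-band in the window onto another thus changes the parity by
`(j - i)(t + 1) + (j - i)(t - 1)`, which is even: all have the same type. Sliding the even
`(k-1)`-band starting at `g(μ) ∈ {\overline{(t+1)η}, (t+1)η}` onto one of them moves one part more
out than in, changing the parity by `t + 1`; the `(k-2)`-band is then of type O.
-/

open Finset

namespace OPart

def upperWeight (η : ℕ) (p : OPart) : ℕ :=
  p.size / η + if p.isOver = true ∧ ¬ η ∣ p.size then 1 else 0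

def lowerWeight (η : ℕ) (p : OPart) : ℕ :=
  p.size / η + if p.isOver = true ∧ η ∣ p.size then 1 else 0

theorem val_of_isOver {p : OPart} (h : p.isOver = true) : p.val = 2 * p.size - 1 := by
  simp [val, h]

theorem val_of_not_isOver {p : OPart} (h : p.isOver = false) : p.val = 2 * p.size := by
  simp [val, h]

theorem eq_of_val_eq {p q : OPart} (hp : p.isOver = true) (hpos : 0 < p.size)
    (h : q.val = p.val) : q = p := by
  rw [val_of_isOver hp] at h
  cases hq : q.isOver
  · rw [val_of_not_isOver hq] at h
    omega
  · rw [val_of_isOver hq] at h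
    obtain ⟨ps, po⟩ := p
    obtain ⟨qs, qo⟩ := q
    dsimp only at hp hq h hpos
    subst hp hq
    rw [show qs = ps by omega]

theorem upperWeight_eq {η t : ℕ} {p : OPart} (hdiv : p.isOver = false → η ∣ p.size)
    (hlo : 2 * (t * η) < p.val) (hhi : p.val ≤ 2 * ((t + 1) * η)) :
    p.upperWeight η = t + 1 := by
  have hsize : t * η < p.size ∧ p.size ≤ (t + 1) * η := by
    cases ho : p.isOver
    · rw [val_of_not_isOver ho] at hlo hhi; omega
    · rw [val_of_isOver ho] at hlo hhi; omega
  by_cases hmid : p.isOver = true ∧ ¬ η ∣ p.size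
  · have hlt : p.size < (t + 1) * η :=
      hsize.2.lt_of_ne fun h => hmid.2 (h ▸ dvd_mul_left η (t + 1))
    rw [upperWeight, if_pos hmid, Nat.div_eq_of_lt_le hsize.1.le hlt]
  · have hdvd : η ∣ p.size := by
      cases ho : p.isOver
      · exact hdiv ho
      · exact not_not.mp fun h => hmid ⟨ho, h⟩
    have hη : 0 < η := Nat.pos_of_ne_zero fun h => by
      simp only [h, mul_zero, nonpos_iff_eq_zero] at hsize
      omega
    have heq : p.size = (t + 1) * η := hsize.2.antisymm <|
      Nat.le_of_lt_add_of_dvd (by rw [add_one_mul]; omega) (dvd_mul_left η (t + 1)) hdvd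
    rw [upperWeight, if_neg hmid, heq, Nat.mul_div_cancel _ hη, add_zero]

theorem lowerWeight_eq {η t : ℕ} {p : OPart} (ht : 1 ≤ t)
    (hs : p.isOver = true → η ∣ p.size → t * η < p.size)
    (hlo : 2 * ((t - 1) * η) ≤ p.val) (hhi : p.val < 2 * (t * η)) :
    p.lowerWeight η = t - 1 := by
  obtain ⟨s, rfl⟩ : ∃ s, t = s + 1 := ⟨t - 1, by omega⟩
  rw [Nat.add_sub_cancel] at hlo ⊢
  rw [add_one_mul] at hs hhi
  have hnot : ¬ (p.isOver = true ∧ η ∣ p.size) := fun h => by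
    have := hs h.1 h.2
    rw [val_of_isOver h.1] at hhi
    omega
  have hsize : s * η ≤ p.size ∧ p.size < s * η + η := by
    cases ho : p.isOver
    · rw [val_of_not_isOver ho] at hlo hhi; omega
    · have hne : p.size ≠ s * η + η := fun h => hnot ⟨ho, h ▸ ⟨s + 1, by ring⟩⟩
      rw [val_of_isOver ho] at hlo hhi
      omega
  rw [lowerWeight, if_neg hnot, Nat.div_eq_of_lt_le hsize.1 (by rw [add_one_mul]; exact hsize.2),
    add_zero]

end OPart

theorem List.eq_of_getD_eq_of_count_le_one {α : Type*} [DecidableEq α] {l : List α} {d : α}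
    {i j : ℕ} (hi : i < l.length) (hj : j < l.length) (h : l.getD i d = l.getD j d)
    (hcount : l.count (l.getD j d) ≤ 1) : i = j := by
  by_contra hne
  have hdup : List.Duplicate (l.getD j d) l := by
    rw [List.duplicate_iff_exists_distinct_get]
    rw [List.getD_eq_getElem _ _ hi] at h
    rw [List.getD_eq_getElem _ _ hj] at h ⊢
    rcases Nat.lt_or_gt_of_ne hne with hlt | hlt
    · exact ⟨⟨i, hi⟩, ⟨j, hj⟩, hlt, by simp [h], rfl⟩
    · exact ⟨⟨j, hj⟩, ⟨i, hi⟩, hlt, rfl, by simp [h]⟩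
  have := List.duplicate_iff_two_le_count.mp hdup
  omega

theorem List.getD_mem_of_lt {α : Type*} {l : List α} {d : α} {e : ℕ} (he : e < l.length) :
    l.getD e d ∈ l := by
  rw [List.getD_eq_getElem _ _ he]
  exact List.getElem_mem he

theorem List.countP_eq_sum_range_getD {α : Type*} (l : List α) (d : α) (P : α → Bool) :
    l.countP P = ∑ e ∈ Finset.range l.length, if P (l.getD e d) then 1 else 0 := by
  induction l with
  | nil => simp
  | cons a l ih =>
    rw [List.countP_cons, List.length_cons, Finset.sum_range_succ', ih]
    simp

section Overpartition

variable {μ : List OPart}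

theorem pval_eq_zero_of_le {e : ℕ} (he : μ.length ≤ e) : pval μ e = 0 := by
  rw [pval, List.getD_eq_default _ _ he]
  rfl

namespace IsOverPartition

theorem pval_antitone (hμ : IsOverPartition μ) : Antitone (pval μ) := by
  intro c d hcd
  rcases lt_or_ge d μ.length with hd | hd
  · rcases hcd.eq_or_lt with rfl | hlt
    · rfl
    · unfold pval
      rw [List.getD_eq_getElem _ _ hd, List.getD_eq_getElem _ _ (hlt.trans hd)]
      exact List.pairwise_iff_getElem.mp hμ.1 c d (hlt.trans hd) hd hlt
  · rw [pval_eq_zero_of_le hd]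
    exact Nat.zero_le _

theorem pval_pos (hμ : IsOverPartition μ) {c : ℕ} (hc : c < μ.length) : 0 < pval μ c := by
  have hpos := hμ.2.1 _ (List.getD_mem_of_lt (d := dpart) hc)
  unfold pval OPart.val
  split <;> omega

theorem eq_of_pval_eq (hμ : IsOverPartition μ) {c d : ℕ} (hc : c < μ.length)
    (hd : d < μ.length) (hover : pover μ d = true) (h : pval μ c = pval μ d) : c = d := by
  have hpart : μ.getD c dpart = μ.getD d dpart :=
    OPart.eq_of_val_eq hover (hμ.2.1 _ (List.getD_mem_of_lt hd)) h
  refine List.eq_of_getD_eq_of_count_le_one hc hd hpart ?_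
  have hd_eq : μ.getD d dpart = ⟨psize μ d, true⟩ := by
    rw [← hover]
    rfl
  rw [hd_eq]
  exact hμ.2.2 _

theorem pval_lt_pval (hμ : IsOverPartition μ) {c d : ℕ} (hcd : c < d) (hc : c < μ.length)
    (hover : pover μ c = true ∨ pover μ d = true) : pval μ d < pval μ c := by
  refine (hμ.pval_antitone hcd.le).lt_of_ne fun h => hcd.ne ?_
  rcases lt_or_ge d μ.length with hd | hd
  · rcases hover with hover | hover
    · exact (hμ.eq_of_pval_eq hd hc hover h).symm
    · exact hμ.eq_of_pval_eq hc hd hover h.symm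
  · have := hμ.pval_pos hc
    rw [pval_eq_zero_of_le hd] at h
    omega

theorem pval_le_iff_of_pover (hμ : IsOverPartition μ) {c e : ℕ} (he : e < μ.length)
    (hover : pover μ e = true) : pval μ e ≤ pval μ c ↔ c ≤ e :=
  ⟨fun h => not_lt.mp fun hlt => (hμ.pval_lt_pval hlt he (.inl hover)).not_ge h,
    fun h => hμ.pval_antitone h⟩

theorem le_pval_iff_of_pover (hμ : IsOverPartition μ) {c e : ℕ} (he : e < μ.length)
    (hover : pover μ e = true) : pval μ c ≤ pval μ e ↔ e ≤ c :=
  ⟨fun h => not_lt.mp fun hlt => (hμ.pval_lt_pval hlt (hlt.trans he) (.inr hover)).not_ge h,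
    fun h => hμ.pval_antitone h⟩

theorem countP_val_le_pval (hμ : IsOverPartition μ) (Q : OPart → Bool) {c : ℕ}
    (hc : c ≤ μ.length) :
    μ.countP (fun p => p.isOver && decide (p.val ≤ pval μ c) && Q p) =
      ∑ e ∈ Ico c μ.length, if (pover μ e && Q (μ.getD e dpart)) = true then 1 else 0 := by
  rw [List.countP_eq_sum_range_getD _ dpart, ← sum_range_add_sum_Ico _ hc,
    sum_eq_zero, zero_add]
  · refine sum_congr rfl fun e he => ?_
    have hce := (mem_Ico.mp he).1
    change (if (pover μ e && decide (pval μ e ≤ pval μ c) && _) = true then 1 else 0) = _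
    simp [hμ.pval_antitone hce]
  · intro e he
    have hec := mem_range.mp he
    change (if (pover μ e && decide (pval μ e ≤ pval μ c) && _) = true then 1 else 0) = 0
    cases hover : pover μ e
    · simp
    · simp [hμ.pval_le_iff_of_pover (hec.trans_le hc) hover, hec]

theorem countP_pval_le_val (hμ : IsOverPartition μ) (Q : OPart → Bool) {c : ℕ}
    (hc : c < μ.length) :
    μ.countP (fun p => p.isOver && decide (pval μ c ≤ p.val) && Q p) =
      ∑ e ∈ range (c + 1), if (pover μ e && Q (μ.getD e dpart)) = true then 1 else 0 := by
  rw [List.countP_eq_sum_range_getD _ dpart, ← sum_range_add_sum_Ico _ hc,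
    sum_eq_zero (s := Ico _ _), add_zero]
  · refine sum_congr rfl fun e he => ?_
    have hec := Nat.lt_succ_iff.mp (mem_range.mp he)
    change (if (pover μ e && decide (pval μ c ≤ pval μ e) && _) = true then 1 else 0) = _
    simp [hμ.pval_antitone hec]
  · intro e he
    obtain ⟨hce, he⟩ := mem_Ico.mp he
    change (if (pover μ e && decide (pval μ c ≤ pval μ e) && _) = true then 1 else 0) = 0
    cases hover : pover μ e
    · simp
    · simp [hμ.le_pval_iff_of_pover he hover]
      omega

theorem Vbar_pval_eq (hμ : IsOverPartition μ) (η : ℕ) {c d : ℕ} (hcd : c ≤ d)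
    (hd : d ≤ μ.length) :
    Vbar η μ (pval μ c) = Vbar η μ (pval μ d) +
      ∑ e ∈ Ico c d, if pover μ e = true ∧ ¬ η ∣ psize μ e then 1 else 0 := by
  rw [Vbar, Vbar, hμ.countP_val_le_pval _ (hcd.trans hd), hμ.countP_val_le_pval _ hd,
    ← sum_Ico_consecutive _ hcd hd, add_comm]
  congr 1
  refine sum_congr rfl fun e _ => ?_
  simp [psize, Nat.dvd_iff_mod_eq_zero]

theorem Obar_pval_eq (hμ : IsOverPartition μ) (η : ℕ) {c d : ℕ} (hcd : c ≤ d)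
    (hd : d < μ.length) :
    Obar η μ (pval μ d) = Obar η μ (pval μ c) +
      ∑ e ∈ Ico (c + 1) (d + 1), if pover μ e = true ∧ η ∣ psize μ e then 1 else 0 := by
  rw [Obar, Obar, hμ.countP_pval_le_val _ hd, hμ.countP_pval_le_val _ (hcd.trans_lt hd),
    ← sum_range_add_sum_Ico _ (Nat.succ_le_succ hcd)]
  congr 1
  refine sum_congr rfl fun e _ => ?_
  simp [psize, Nat.dvd_iff_mod_eq_zero]

end IsOverPartition

end Overpartition

def bandDefect (η : ℕ) (π : List OPart) (m i : ℕ) : ℤ :=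
  bandSum η π i m - Vbar η π (pval π i) - Obar η π (pval π (i + m - 1))

theorem typeN_iff_bandDefect {η r t m i : ℕ} {π : List OPart} :
    TypeN η r t π m i ↔ bandDefect η π m i ≡ t + r - 1 [ZMOD 2] := by
  unfold TypeN bandDefect Int.ModEq
  omega

theorem evenBand_iff_bandDefect {η r m i : ℕ} {π : List OPart} :
    EvenBand η r π m i ↔ bandDefect η π m i ≡ r - 1 [ZMOD 2] := by
  unfold EvenBand bandDefect Int.ModEq
  omega

theorem bandSum_eq_sum_Ico (η : ℕ) (π : List OPart) (i m : ℕ) :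
    bandSum η π i m = ∑ e ∈ Ico i (i + m), psize π e / η := by
  rw [bandSum, sum_Ico_eq_sum_range, Nat.add_sub_cancel_left]

theorem IsOverPartition.bandDefect_modEq {η : ℕ} {μ : List OPart} (hμ : IsOverPartition μ)
    {i j m₁ m₂ : ℕ} (hij : i ≤ j) (hi : 0 < i + m₁) (hm : i + m₁ ≤ j + m₂)
    (hj : j + m₂ ≤ μ.length) :
    bandDefect η μ m₁ i ≡ bandDefect η μ m₂ j +
      ((∑ e ∈ Ico i j, (μ.getD e dpart).upperWeight η : ℕ) : ℤ) +
      ((∑ e ∈ Ico (i + m₁) (j + m₂), (μ.getD e dpart).lowerWeight η : ℕ) : ℤ) [ZMOD 2] := by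
  have hsum : bandSum η μ i m₁ + ∑ e ∈ Ico (i + m₁) (j + m₂), psize μ e / η =
      ∑ e ∈ Ico i j, psize μ e / η + bandSum η μ j m₂ := by
    rw [bandSum_eq_sum_Ico, bandSum_eq_sum_Ico, sum_Ico_consecutive _ (by omega) hm,
      sum_Ico_consecutive _ hij (by omega)]
  have hV := hμ.Vbar_pval_eq η hij (by omega)
  have hO := hμ.Obar_pval_eq η (c := i + m₁ - 1) (d := j + m₂ - 1) (by omega) (by omega)
  rw [Nat.sub_add_cancel hi, Nat.sub_add_cancel (by omega)] at hO
  have hU : ∑ e ∈ Ico i j, (μ.getD e dpart).upperWeight η = ∑ e ∈ Ico i j, psize μ e / η +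
      ∑ e ∈ Ico i j, if pover μ e = true ∧ ¬ η ∣ psize μ e then 1 else 0 :=
    sum_add_distrib
  have hL : ∑ e ∈ Ico (i + m₁) (j + m₂), (μ.getD e dpart).lowerWeight η =
      ∑ e ∈ Ico (i + m₁) (j + m₂), psize μ e / η +
      ∑ e ∈ Ico (i + m₁) (j + m₂), if pover μ e = true ∧ η ∣ psize μ e then 1 else 0 :=
    sum_add_distrib
  unfold bandDefect Int.ModEq
  omega

section Window

variable {η k r t : ℕ} {μ : List OPart}

theorem lt_pval_of_not_isBand (hη : 0 < η) {m c x : ℕ} (hb : ¬ IsBand η μ m c)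
    (hc : c + m ≤ μ.length) (hx : 2 * x ≤ pval μ (c + m - 1)) : 2 * (x + η) < pval μ c := by
  simp only [IsBand, not_and, Classical.not_imp, not_lt] at hb
  by_cases hle : pval μ c ≤ pval μ (c + m - 1) + 2 * η
  · -- then `μ_c` is overlined, so its value is odd and cannot equal `2 * (x + η)`
    have hval : pval μ c = 2 * psize μ c - 1 := OPart.val_of_isOver (hb hc hle).1
    omega
  · omega

theorem pval_lt_of_not_isBand (hη : 0 < η) {m c x : ℕ} (hb : ¬ IsBand η μ m c)
    (hc : c + m ≤ μ.length) (hx : pval μ c ≤ 2 * (x + η)) : pval μ (c + m - 1) < 2 * x :=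
  lt_of_not_ge fun h => (lt_pval_of_not_isBand hη hb hc h).not_ge hx

theorem not_isBand_of_pval_lt {x c : ℕ} (hg : GGe η k μ x) (hc : pval μ c < x) :
    ¬ IsBand η μ (k - 1) c :=
  fun hb => (hg c hb).not_gt hc

theorem lt_pval_of_GGe (hη : 0 < η) (ht : 1 ≤ t) (hk : 2 ≤ k)
    (hg : GGe η k μ (2 * ((t + 1) * η) - 1)) {c : ℕ} (hc : c + (k - 1) ≤ μ.length)
    (hlow : 2 * ((t - 1) * η) ≤ pval μ (c + k - 2)) : 2 * (t * η) < pval μ c := by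
  have htη : (t - 1) * η + η = t * η := by rw [← add_one_mul, Nat.sub_add_cancel ht]
  by_cases hb : IsBand η μ (k - 1) c
  · have := hg c hb
    rw [add_one_mul] at this
    omega
  · have := lt_pval_of_not_isBand hη hb hc (x := (t - 1) * η)
      (by rwa [show c + (k - 1) - 1 = c + k - 2 by omega])
    omega

theorem typeN_iff_typeN_of_bandInO (hη : 0 < η) (ht : 1 ≤ t) (hk : 2 ≤ k)
    (hμ : IsOverPartition μ) (hdiv : ∀ p ∈ μ, p.isOver = false → η ∣ p.size)
    (hs : SGt η t μ) (hg : GGe η k μ (2 * ((t + 1) * η) - 1)) {a b : ℕ} (hab : a ≤ b)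
    (ha : BandInO η t μ (k - 2) a) (hb : BandInO η t μ (k - 2) b) :
    TypeN η r t μ (k - 2) a ↔ TypeN η r t μ (k - 2) b := by
  obtain ⟨⟨-, -, -⟩, -, haHigh⟩ := ha
  obtain ⟨⟨hbLen, -, -⟩, hbLow, -⟩ := hb
  rcases hab.eq_or_lt with rfl | hab
  · rfl
  have hbot : pval μ (a + (k - 2)) < 2 * (t * η) := by
    have := pval_lt_of_not_isBand hη (not_isBand_of_pval_lt hg haHigh) (by omega) (x := t * η)
      (by rw [← add_one_mul]; omega)
    rwa [show a + (k - 1) - 1 = a + (k - 2) by omega] at this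
  have hupper (e) (he : e ∈ Ico a b) : (μ.getD e dpart).upperWeight η = t + 1 := by
    obtain ⟨hae, heb⟩ := mem_Ico.mp he
    refine OPart.upperWeight_eq (hdiv _ (List.getD_mem_of_lt (by omega))) ?_ ?_
    · exact lt_pval_of_GGe hη ht hk hg (by omega)
        (hbLow.trans (hμ.pval_antitone (by omega)))
    · exact (hμ.pval_antitone hae).trans (by omega)
  have hlower (e) (he : e ∈ Ico (a + (k - 2)) (b + (k - 2))) :
      (μ.getD e dpart).lowerWeight η = t - 1 := by
    obtain ⟨hae, heb⟩ := mem_Ico.mp he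
    refine OPart.lowerWeight_eq ht (hs _ (List.getD_mem_of_lt (by omega))) ?_ ?_
    · exact hbLow.trans (hμ.pval_antitone (by omega))
    · exact (hμ.pval_antitone hae).trans_lt hbot
  -- excludes `a = 0, k = 2`, where `μ_a` would lie both above and below `tη`
  have hpos : 0 < a + (k - 2) := by
    by_contra h0
    have := lt_pval_of_GGe hη ht hk hg (c := a) (by omega)
      (hbLow.trans (hμ.pval_antitone (by omega)))
    rw [show a + (k - 2) = a by omega] at hbot
    omega
  have hshift := hμ.bandDefect_modEq (η := η) hab.le hpos (by omega) hbLen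
  rw [sum_const_nat hupper, sum_const_nat hlower, Nat.card_Ico, Nat.card_Ico, add_assoc,
    ← Nat.cast_add, show b + (k - 2) - (a + (k - 2)) = b - a by omega,
    show (b - a) * (t + 1) + (b - a) * (t - 1) = 2 * ((b - a) * t) by
      obtain ⟨s, rfl⟩ : ∃ s, t = s + 1 := ⟨t - 1, by omega⟩
      rw [Nat.add_sub_cancel]; ring] at hshift
  simp only [typeN_iff_bandDefect, Int.ModEq] at hshift ⊢
  omega

theorem not_typeN_of_isBand (hη : 0 < η) (ht : 1 ≤ t) (hk : 2 ≤ k)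
    (hμ : IsOverPartition μ) (hdiv : ∀ p ∈ μ, p.isOver = false → η ∣ p.size)
    (hcond : ∀ i, i + k ≤ μ.length →
      pval μ (i + k - 1) + 2 * η ≤ pval μ i ∧
        (pover μ i = false → pval μ (i + k - 1) + 2 * η < pval μ i))
    (heven : ∀ i, IsBand η μ (k - 1) i → EvenBand η r μ (k - 1) i)
    (hs : SGt η t μ) (hg : GGe η k μ (2 * ((t + 1) * η) - 1)) {i a : ℕ}
    (hi : IsBand η μ (k - 1) i) (hvi : pval μ i ≤ 2 * ((t + 1) * η))
    (ha : BandInO η t μ (k - 2) a) : ¬ TypeN η r t μ (k - 2) a := by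
  obtain ⟨⟨haLen, -, -⟩, haLow, haHigh⟩ := ha
  have hia : i < a := lt_of_not_ge fun h => (hμ.pval_antitone h).not_gt
    (haHigh.trans_le (hg i hi))
  have hupper (e) (he : e ∈ Ico i a) : (μ.getD e dpart).upperWeight η = t + 1 := by
    obtain ⟨hie, hea⟩ := mem_Ico.mp he
    refine OPart.upperWeight_eq (hdiv _ (List.getD_mem_of_lt (by omega))) ?_ ?_
    · exact lt_pval_of_GGe hη ht hk hg (by omega)
        (haLow.trans (hμ.pval_antitone (by omega)))
    · exact (hμ.pval_antitone hie).trans hvi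
  have hlower (e) (he : e ∈ Ico (i + (k - 1)) (a + (k - 2))) :
      (μ.getD e dpart).lowerWeight η = t - 1 := by
    obtain ⟨hie, hea⟩ := mem_Ico.mp he
    have hik : i + k ≤ μ.length := by omega
    have hnb : ¬ IsBand η μ k i := by
      rintro ⟨-, h₁, h₂⟩
      obtain ⟨h₃, h₄⟩ := hcond i hik
      cases hover : pover μ i
      · exact (h₄ hover).not_ge h₁
      · exact (h₂ hover).not_ge h₃
    have htop := pval_lt_of_not_isBand hη hnb hik (x := t * η) (by rwa [← add_one_mul])
    refine OPart.lowerWeight_eq ht (hs _ (List.getD_mem_of_lt (by omega))) ?_ ?_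
    · exact haLow.trans (hμ.pval_antitone (by omega))
    · exact (hμ.pval_antitone (by omega)).trans_lt htop
  have hshift := hμ.bandDefect_modEq (η := η) (m₁ := k - 1) (m₂ := k - 2) hia.le (by omega)
    (by omega) haLen
  rw [sum_const_nat hupper, sum_const_nat hlower, Nat.card_Ico, Nat.card_Ico, add_assoc,
    ← Nat.cast_add, show a + (k - 2) - (i + (k - 1)) = a - i - 1 by omega,
    show (a - i) * (t + 1) + (a - i - 1) * (t - 1) = 2 * ((a - i - 1) * t) + t + 1 by
      obtain ⟨s, rfl⟩ : ∃ s, t = s + 1 := ⟨t - 1, by omega⟩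
      obtain ⟨d, hd⟩ : ∃ d, a - i = d + 1 := ⟨a - i - 1, by omega⟩
      rw [hd, Nat.add_sub_cancel, Nat.add_sub_cancel]; ring] at hshift
  have hev := evenBand_iff_bandDefect.mp (heven i hi)
  rw [typeN_iff_bandDefect]
  intro htype
  simp only [Int.ModEq] at hshift hev htype
  omega

end Window

theorem stmt_9_general (α : ℕ → ℕ) (lam η k r : ℕ)
    (hη : 0 < η)
    (hlk : lam + 1 < k)
    (t : ℕ) (ht : 1 ≤ t) (μ : List OPart) (hμ : InBgt α lam η k r t μ) :
    (∀ i j, BandInO η t μ (k - 2) i → BandInO η t μ (k - 2) j →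
      (TypeN η r t μ (k - 2) i ↔ TypeN η r t μ (k - 2) j)) ∧
    ((∃ i, IsBand η μ (k - 1) i ∧ pval μ i ≤ 2 * ((t + 1) * η)) →
      ∀ i, BandInO η t μ (k - 2) i → ¬ TypeN η r t μ (k - 2) i) := by
  obtain ⟨⟨⟨hov, -, hdiv, hcond, -⟩, -, heven⟩, hs, hg⟩ := hμ
  have hk : 2 ≤ k := by omega
  refine ⟨fun i j hi hj => ?_, fun ⟨i₀, hi₀, hvi₀⟩ a ha =>
    not_typeN_of_isBand hη ht hk hov hdiv hcond heven hs hg hi₀ hvi₀ ha⟩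
  rcases le_total i j with hij | hji
  · exact typeN_iff_typeN_of_bandInO hη ht hk hov hdiv hs hg hij hi hj
  · exact (typeN_iff_typeN_of_bandInO hη ht hk hov hdiv hs hg hji hj hi).symm

theorem stmt_9 (α : ℕ → ℕ) (lam η k r : ℕ)
    (hη : 0 < η)
    (hαpos : ∀ i, 1 ≤ i → i ≤ lam → 0 < α i ∧ α i < η)
    (hαmono : ∀ i j, 1 ≤ i → i < j → j ≤ lam → α i < α j)
    (hαsym : ∀ i, 1 ≤ i → i ≤ lam → α i = η - α (lam + 1 - i))
    (hrk : r < k) (hlr : lam ≤ r) (hlk : lam + 1 < k)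
    (t : ℕ) (ht : 1 ≤ t) (μ : List OPart) (hμ : InBgt α lam η k r t μ)
    (hex : ∃ i, BandInO η t μ (k - 2) i) :
    (∀ i j, BandInO η t μ (k - 2) i → BandInO η t μ (k - 2) j →
      (TypeN η r t μ (k - 2) i ↔ TypeN η r t μ (k - 2) j)) ∧
    ((∃ i, IsBand η μ (k - 1) i ∧ pval μ i ≤ 2 * ((t + 1) * η)) →
      ∀ i, BandInO η t μ (k - 2) i → ¬ TypeN η r t μ (k - 2) i) :=
  stmt_9_general α lam η k r hη hlk t ht μ hμ
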